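/- Transitive closure of per-rank program order and barrier synchronization edges is acyclic: given events partitioned by rank with a strict total program order per rank, plus synchronization edges from every barrier-enter event to every barrier-exit event of the same barrier instance (entries precede exits), where each rank's enter precedes its exit in program order, the union generates a strict partial order (no cycles), provided barrier instances are consistently ordered per rank (each rank participates in barriers in the same global sequence). -/
import Mathlib


/-- acyclicity of per-rank program order together with barrier
synchronization edges. Events `E` carry a rank and a per-rank index `idx`
giving program order. For each rank `r` and barrier instance `b`, `enter r b`
and `exit r b` are events of rank `r` with `idx (enter r b) < idx (exit r b)`
and `idx (exit r b) < idx (enter r (b+1))` (barriers occur in the same global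
sequence on every rank). Edges are: program-order edges (same rank, smaller
index) and synchronization edges `enter r b → exit r' b`. The transitive
closure of this edge relation is irreflexive, i.e. there is no cycle. -/
theorem program_order_barrier_acyclic
    {E R : Type*} (rank : E → R) (idx : E → ℕ)
    (enter exit : R → ℕ → E)
    (hrank_enter : ∀ r b, rank (enter r b) = r)
    (hrank_exit : ∀ r b, rank (exit r b) = r)
    (henter_exit : ∀ r b, idx (enter r b) < idx (exit r b))
    (hexit_next : ∀ r b, idx (exit r b) < idx (enter r (b + 1)))
    (Edge : E → E → Prop)
    (hEdge : ∀ x y, Edge x y ↔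
      ((rank x = rank y ∧ idx x < idx y) ∨
        ∃ r r' b, x = enter r b ∧ y = exit r' b)) :
    ∀ x, ¬ Relation.TransGen Edge x x := by
  -- monotonicity of barrier indices per rank
  have hee : ∀ r, StrictMono (fun b => idx (enter r b)) := fun r =>
    strictMono_nat_of_lt_succ fun b => lt_trans (henter_exit r b) (hexit_next r b)
  have hxx : ∀ r, StrictMono (fun b => idx (exit r b)) := fun r =>
    strictMono_nat_of_lt_succ fun b => lt_trans (hexit_next r b) (henter_exit r (b + 1))
  have hge : ∀ r b, b ≤ idx (enter r b) := fun r b => (hee r).le_apply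
  -- existence for Nat.find
  have hNe : ∀ x : E, ∃ b, idx x < idx (enter (rank x) b) := by
    intro x
    exact ⟨idx x + 1, lt_of_lt_of_le (Nat.lt_succ_self _) (hge _ _)⟩
  have hNx : ∀ x : E, ∃ b, idx x < idx (exit (rank x) b) := by
    intro x
    refine ⟨idx x + 1, ?_⟩
    exact lt_of_lt_of_le (Nat.lt_succ_self _)
      (le_trans (hge _ _) (le_of_lt (henter_exit _ _)))
  set ne : E → ℕ := fun x => Nat.find (hNe x) with hne_def
  set nx : E → ℕ := fun x => Nat.find (hNx x) with hnx_def
  set lvl : E → ℕ := fun x => ne x + nx x with hlvl_def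
  -- monotonicity of ne, nx along program order
  have hmono_ne : ∀ x y : E, rank x = rank y → idx x ≤ idx y → ne x ≤ ne y := by
    intro x y hr hi
    refine Nat.find_mono ?_
    intro n hn
    rw [hr]
    exact lt_of_le_of_lt hi hn
  have hmono_nx : ∀ x y : E, rank x = rank y → idx x ≤ idx y → nx x ≤ nx y := by
    intro x y hr hi
    refine Nat.find_mono ?_
    intro n hn
    rw [hr]
    exact lt_of_le_of_lt hi hn
  -- values at barrier events
  have hne_enter : ∀ r b, ne (enter r b) = b + 1 := by
    intro r b
    rw [hne_def]
    rw [Nat.find_eq_iff]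
    constructor
    · rw [hrank_enter]
      exact (hee r) (Nat.lt_succ_self b)
    · intro m hm
      rw [hrank_enter]
      exact not_lt.2 ((hee r).monotone (Nat.lt_succ_iff.mp hm))
  have hnx_enter : ∀ r b, nx (enter r b) = b := by
    intro r b
    rw [hnx_def]
    rw [Nat.find_eq_iff]
    constructor
    · rw [hrank_enter]
      exact henter_exit r b
    · intro m hm
      rw [hrank_enter]
      refine not_lt.2 (le_of_lt ?_)
      calc idx (exit r m) < idx (enter r (m + 1)) := hexit_next r m
        _ ≤ idx (enter r b) := (hee r).monotone hm
  have hne_exit : ∀ r b, ne (exit r b) = b + 1 := by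
    intro r b
    rw [hne_def]
    rw [Nat.find_eq_iff]
    constructor
    · rw [hrank_exit]
      exact hexit_next r b
    · intro m hm
      rw [hrank_exit]
      refine not_lt.2 (le_of_lt ?_)
      calc idx (enter r m) ≤ idx (enter r b) := (hee r).monotone (Nat.lt_succ_iff.mp hm)
        _ < idx (exit r b) := henter_exit r b
  have hnx_exit : ∀ r b, nx (exit r b) = b + 1 := by
    intro r b
    rw [hnx_def]
    rw [Nat.find_eq_iff]
    constructor
    · rw [hrank_exit]
      exact (hxx r) (Nat.lt_succ_self b)
    · intro m hm
      rw [hrank_exit]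
      exact not_lt.2 ((hxx r).monotone (Nat.lt_succ_iff.mp hm))
  -- the strict measure
  set P : E → E → Prop := fun x y => lvl x < lvl y ∨ (lvl x = lvl y ∧ idx x < idx y)
    with hP_def
  have hEdgeP : ∀ x y, Edge x y → P x y := by
    intro x y hxy
    rcases (hEdge x y).1 hxy with ⟨hr, hi⟩ | ⟨r, r', b, rfl, rfl⟩
    · have h1 := hmono_ne x y hr (le_of_lt hi)
      have h2 := hmono_nx x y hr (le_of_lt hi)
      rw [hP_def]
      simp only [hlvl_def]
      omega
    · left
      simp only [hlvl_def]
      rw [hne_enter, hnx_enter, hne_exit, hnx_exit]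
      omega
  have hPtrans : ∀ x y z : E, P x y → P y z → P x z := by
    intro x y z h1 h2
    rw [hP_def] at *
    omega
  intro x hx
  have key : ∀ y : E, Relation.TransGen Edge x y → P x y := by
    intro y hy
    induction hy with
    | single h => exact hEdgeP _ _ h
    | tail _ h ih => exact hPtrans _ _ _ ih (hEdgeP _ _ h)
  have : P x x := key x hx
  rw [hP_def] at this
  omega
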